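/- Let z ∈ ℝⁿ and w > 0 with ‖z‖_∞ ≤ w ≤ ‖z‖₁. Define λ̃₁ = inf{λ ≥ 0 : ‖S(z,λ)‖₁ + λ ≤ w}, λ̃₂ = sup{λ ≥ 0 : ‖S(z,λ)‖₁ + λ ≤ w}, and λ̃₃ = sup{λ ≥ 0 : ‖S(z,2λ)‖₁ ≥ w}. Then λ̃₃ ≤ λ̃₁ ≤ λ̃₂. -/

import Mathlib

noncomputable def softTh (x t : ℝ) : ℝ := Real.sign x * max (|x| - t) 0

/-! The map `t ↦ ‖S(z,t)‖₁` is antitone, and strictly decreasing wherever it is positive. A threshold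
`a` with `‖S(z,a)‖₁ + a ≤ w` and a threshold `b` with `w ≤ ‖S(z,2b)‖₁` therefore satisfy `b ≤ a`:
otherwise `a < 2b` and `0 < w ≤ ‖S(z,2b)‖₁ < ‖S(z,a)‖₁ ≤ w`. This separates the two sets, giving
`λ̃₃ ≤ λ̃₁`; `λ̃₁ ≤ λ̃₂` holds because the set is nonempty (it contains `w`, as `‖z‖_∞ ≤ w`) and
bounded. -/

lemma abs_softTh (x : ℝ) {t : ℝ} (ht : 0 ≤ t) : |softTh x t| = max (|x| - t) 0 := by
  unfold softTh
  rcases lt_trichotomy x 0 with hx | rfl | hx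
  · simp [Real.sign_of_neg hx]
  · simp [ht]
  · simp [Real.sign_of_pos hx]

lemma abs_softTh_zero (x : ℝ) : |softTh x 0| = |x| := by
  simp [abs_softTh x le_rfl]

lemma abs_softTh_anti (x : ℝ) {s t : ℝ} (hs : 0 ≤ s) (hst : s ≤ t) :
    |softTh x t| ≤ |softTh x s| := by
  rw [abs_softTh x hs, abs_softTh x (hs.trans hst)]
  exact max_le_max (by linarith) le_rfl

lemma abs_softTh_lt_of_pos (x : ℝ) {s t : ℝ} (hs : 0 ≤ s) (hst : s < t)
    (hpos : 0 < |softTh x s|) : |softTh x t| < |softTh x s| := by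
  rw [abs_softTh x hs] at hpos ⊢
  rw [abs_softTh x (hs.trans hst.le)]
  have hx : 0 < |x| - s := by simpa using hpos
  rw [max_eq_left hx.le]
  exact max_lt (by linarith) hx

section Sums

variable {ι : Type*} [Fintype ι] (z : ι → ℝ)

lemma sum_abs_softTh_eq_zero {t : ℝ} (hz : ∀ k, |z k| ≤ t) : ∑ k, |softTh (z k) t| = 0 := by
  refine Finset.sum_eq_zero fun k _ => ?_
  rw [abs_softTh _ ((abs_nonneg _).trans (hz k)), max_eq_right (by linarith [hz k])]

lemma sum_abs_softTh_anti {s t : ℝ} (hs : 0 ≤ s) (hst : s ≤ t) :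
    ∑ k, |softTh (z k) t| ≤ ∑ k, |softTh (z k) s| :=
  Finset.sum_le_sum fun k _ => abs_softTh_anti (z k) hs hst

lemma sum_abs_softTh_lt_of_pos {s t : ℝ} (hs : 0 ≤ s) (hst : s < t)
    (hpos : 0 < ∑ k, |softTh (z k) s|) : ∑ k, |softTh (z k) t| < ∑ k, |softTh (z k) s| := by
  obtain ⟨k₀, -, hk₀⟩ := Finset.exists_lt_of_sum_lt (f := fun _ => (0 : ℝ)) (by simpa using hpos)
  exact Finset.sum_lt_sum (fun k _ => abs_softTh_anti (z k) hs hst.le)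
    ⟨k₀, Finset.mem_univ _, abs_softTh_lt_of_pos (z k₀) hs hst hk₀⟩

lemma le_of_le_sum_abs_softTh_two_mul {w a b : ℝ} (hw : 0 < w) (ha : 0 ≤ a)
    (hA : ∑ k, |softTh (z k) a| + a ≤ w) (hB : w ≤ ∑ k, |softTh (z k) (2 * b)|) : b ≤ a := by
  by_contra! hab
  have hlt : a < 2 * b := by linarith
  have hpos : 0 < ∑ k, |softTh (z k) a| :=
    hw.trans_le (hB.trans (sum_abs_softTh_anti z ha hlt.le))
  linarith [sum_abs_softTh_lt_of_pos z ha hlt hpos]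

end Sums

theorem stmt_9 (n : ℕ) (z : Fin n → ℝ) (w : ℝ) (hw : 0 < w)
    (h1 : (⨆ k, |z k|) ≤ w) (h2 : w ≤ ∑ k, |z k|) :
    sSup {lam : ℝ | 0 ≤ lam ∧ w ≤ ∑ k, |softTh (z k) (2 * lam)|}
      ≤ sInf {lam : ℝ | 0 ≤ lam ∧ (∑ k, |softTh (z k) lam|) + lam ≤ w} ∧
    sInf {lam : ℝ | 0 ≤ lam ∧ (∑ k, |softTh (z k) lam|) + lam ≤ w}
      ≤ sSup {lam : ℝ | 0 ≤ lam ∧ (∑ k, |softTh (z k) lam|) + lam ≤ w} := by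
  have hwA : w ∈ {lam : ℝ | 0 ≤ lam ∧ (∑ k, |softTh (z k) lam|) + lam ≤ w} := by
    refine ⟨hw.le, ?_⟩
    rw [sum_abs_softTh_eq_zero z fun k => (le_ciSup (Finite.bddAbove_range _) k).trans h1, zero_add]
  have h0B : 0 ∈ {lam : ℝ | 0 ≤ lam ∧ w ≤ ∑ k, |softTh (z k) (2 * lam)|} := by
    simpa [abs_softTh_zero] using h2
  refine ⟨csSup_le ⟨0, h0B⟩ fun b hb => le_csInf ⟨w, hwA⟩ fun a ha => ?_,
    csInf_le_csSup ⟨w, hwA⟩ ⟨0, fun a ha => ha.1⟩ ⟨w, fun a ha => ?_⟩⟩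
  · exact le_of_le_sum_abs_softTh_two_mul z hw ha.1 ha.2 hb.2
  · linarith [ha.2, Finset.sum_nonneg fun k (_ : k ∈ Finset.univ) => abs_nonneg (softTh (z k) a)]
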